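/- For every real number a the following Riemann–Roch identity holds: h0(a) − h1(a) = ⌈(a + log 2)/log 3⌉' − 1_L(a). Here h0(a) is the minimal cardinality of a finite set generating at level n = ⌊e^a⌋, h1(a) = 0 if e^a ≥ 1/2 and otherwise h1(a) is the minimal cardinality of a finite subset of ℝ/ℤ generating at tolerance e^a, ⌈·⌉' is the odd extension of the ceiling function, and 1_L is the characteristic function of the exceptional set L. -/
import Mathlib


open Classical
open MeasureTheory
open scoped ENNReal

/-- A finite set `F ⊆ ℤ ∩ [-n, n]` *generates at level* `n` if every integer `x`
with `|x| ≤ n` can be written as `x = ∑_{j∈F} α(j)·j` for coefficients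
`α(j) ∈ {-1,0,1}` whose total mass `∑ |α(j)·j|` is at most `n`. -/
def GeneratesAtLevel (n : ℤ) (F : Finset ℤ) : Prop :=
  (∀ j ∈ F, -n ≤ j ∧ j ≤ n) ∧
  ∀ x : ℤ, |x| ≤ n →
    ∃ α : ℤ → ℤ, (∀ j ∈ F, α j = -1 ∨ α j = 0 ∨ α j = 1) ∧
      x = ∑ j ∈ F, α j * j ∧ (∑ j ∈ F, |α j * j|) ≤ n

/-- A finite set `F ⊂ ℝ/ℤ` *generates at tolerance* `λ` if distinct elements of
`F` are at distance `> λ` and every `x ∈ ℝ/ℤ` is at distance `≤ λ` from some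
sum `∑_{j∈F} α(j)·j` with `α(j) ∈ {-1,0,1}`. -/
def GeneratesAtTolerance (lam : ℝ) (F : Finset (AddCircle (1 : ℝ))) : Prop :=
  (∀ x ∈ F, ∀ y ∈ F, x ≠ y → lam < dist x y) ∧
  ∀ x : AddCircle (1 : ℝ), ∃ α : AddCircle (1 : ℝ) → ℤ,
    (∀ j ∈ F, α j = -1 ∨ α j = 0 ∨ α j = 1) ∧
    dist x (∑ j ∈ F, α j • j) ≤ lam

/-- `h0 a`: the minimal cardinality of a finite set generating at level
`n = ⌊e^a⌋`; it is `dim_{S[±1]} H⁰(D)` for `D = a{∞}`. -/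
noncomputable def h0 (a : ℝ) : ℕ :=
  sInf {c : ℕ | ∃ F : Finset ℤ, GeneratesAtLevel ⌊Real.exp a⌋ F ∧ F.card = c}

/-- `h1 a`: zero if `e^a ≥ 1/2`, and otherwise the minimal cardinality of a
finite subset of `ℝ/ℤ` generating at tolerance `e^a`; it is
`dim_{S[±1]} H¹(D)` for `D = a{∞}`. -/
noncomputable def h1 (a : ℝ) : ℕ :=
  if 1 / 2 ≤ Real.exp a then 0
  else sInf {c : ℕ | ∃ F : Finset (AddCircle (1 : ℝ)),
    GeneratesAtTolerance (Real.exp a) F ∧ F.card = c}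

/-- The odd extension `⌈·⌉'` of the ceiling function. -/
noncomputable def ceil' (x : ℝ) : ℤ := if 0 ≤ x then ⌈x⌉ else -⌈-x⌉

/-- The exceptional set `L`. -/
def excL : Set ℝ :=
  {a | ∃ k : ℕ, (k : ℝ) * Real.log 3 < a + Real.log 2 ∧
    a + Real.log 2 < (k : ℝ) * Real.log 3 + Real.log (1 + (3 : ℝ) ^ (-(k : ℤ)))}


lemma genIns {m c : ℤ} {F : Finset ℤ} (hm : 0 ≤ m) (hc1 : 1 ≤ c) (hc2 : c ≤ 2*m+1)
    (hcF : c ∉ F) (h : GeneratesAtLevel m F) : GeneratesAtLevel (m + c) (insert c F) := by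
  obtain ⟨hb, hgen⟩ := h
  constructor
  · intro j hj
    rcases Finset.mem_insert.mp hj with rfl | hj
    · constructor <;> linarith
    · obtain ⟨h1, h2⟩ := hb j hj
      constructor <;> linarith
  · intro x hx
    rcases le_or_gt |x| m with hle | hgt
    · obtain ⟨α, hα, hsum, hmass⟩ := hgen x hle
      refine ⟨Function.update α c 0, ?_, ?_, ?_⟩
      · intro j hj
        rcases Finset.mem_insert.mp hj with rfl | hj
        · simp
        · rw [Function.update_of_ne (fun (h : j = c) => hcF (h ▸ hj))]
          exact hα j hj
      · rw [Finset.sum_insert hcF, Function.update_self]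
        rw [Finset.sum_congr rfl (fun j hj => by
          rw [Function.update_of_ne (fun (h : j = c) => hcF (h ▸ hj))])]
        simpa using hsum
      · rw [Finset.sum_insert hcF, Function.update_self]
        rw [Finset.sum_congr rfl (fun j hj => by
          rw [Function.update_of_ne (fun (h : j = c) => hcF (h ▸ hj))])]
        simp only [zero_mul, abs_zero, zero_add]
        linarith
    · -- |x| > m
      have hsx : (0 ≤ x ∧ m < x) ∨ (x < 0 ∧ x < -m) := by
        rcases abs_cases x with ⟨h1, h2⟩ | ⟨h1, h2⟩ <;> [left; right] <;> constructor <;> linarith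
      set s : ℤ := if 0 ≤ x then 1 else -1 with hs
      have hy : |x - s * c| ≤ m := by
        have hx' : |x| ≤ m + c := hx
        rcases hsx with ⟨h1, h2⟩ | ⟨h1, h2⟩
        · simp only [hs, if_pos h1, one_mul]
          rw [abs_le]; rw [abs_le] at hx'; constructor <;> linarith
        · simp only [hs, if_neg (not_le.mpr h1), neg_one_mul]
          rw [abs_le]; rw [abs_le] at hx'; constructor <;> linarith
      obtain ⟨α, hα, hsum, hmass⟩ := hgen (x - s * c) hy
      have hsval : s = 1 ∨ s = -1 := by
        rcases le_or_gt 0 x with h | h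
        · left; simp [hs, h]
        · right; simp [hs, not_le.mpr h]
      refine ⟨Function.update α c s, ?_, ?_, ?_⟩
      · intro j hj
        rcases Finset.mem_insert.mp hj with rfl | hj
        · rw [Function.update_self]; rcases hsval with h | h <;> simp [h]
        · rw [Function.update_of_ne (fun (h : j = c) => hcF (h ▸ hj))]
          exact hα j hj
      · rw [Finset.sum_insert hcF, Function.update_self]
        rw [Finset.sum_congr rfl (fun j hj => by
          rw [Function.update_of_ne (fun (h : j = c) => hcF (h ▸ hj))])]
        rw [← hsum]; ring
      · rw [Finset.sum_insert hcF, Function.update_self]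
        rw [Finset.sum_congr rfl (fun j hj => by
          rw [Function.update_of_ne (fun (h : j = c) => hcF (h ▸ hj))])]
        have : |s * c| = c := by
          rcases hsval with h | h <;> simp [h, abs_of_nonneg (by linarith : (0:ℤ) ≤ c)]
        rw [this]; linarith

lemma genZero : GeneratesAtLevel 0 ∅ := by
  refine ⟨by simp, fun x hx => ⟨fun _ => 0, by simp, ?_, by simp⟩⟩
  have := abs_le.mp hx
  simp only [Finset.sum_empty]
  omega

lemma genOne : GeneratesAtLevel 1 {1} := by
  refine ⟨by decide, fun x hx => ⟨fun _ => x, fun j hj => ?_, by simp, ?_⟩⟩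
  · show x = -1 ∨ x = 0 ∨ x = 1
    have := abs_le.mp hx; omega
  · simp only [Finset.sum_singleton, mul_one]
    exact hx

lemma genTwo : GeneratesAtLevel 2 {1, 2} := by
  refine ⟨by decide, fun x hx => ?_⟩
  have hx' := abs_le.mp hx
  obtain ⟨h1, h2⟩ := hx'
  interval_cases x
  · exact ⟨fun j => if j = 2 then -1 else 0, by decide, by decide, by decide⟩
  · exact ⟨fun j => if j = 1 then -1 else 0, by decide, by decide, by decide⟩
  · exact ⟨fun _ => 0, by decide, by decide, by decide⟩
  · exact ⟨fun j => if j = 1 then 1 else 0, by decide, by decide, by decide⟩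
  · exact ⟨fun j => if j = 2 then 1 else 0, by decide, by decide, by decide⟩

lemma genExists : ∀ (k : ℕ) (n : ℤ), 0 ≤ n → 2*n + 1 ≤ 3^k →
    ∃ F : Finset ℤ, (∀ j ∈ F, 1 ≤ j ∧ j ≤ n) ∧ F.card ≤ k ∧ GeneratesAtLevel n F := by
  intro k
  induction k with
  | zero =>
    intro n hn h
    have : n = 0 := by simp only [pow_zero] at h; omega
    subst this
    exact ⟨∅, by simp, by simp, genZero⟩
  | succ k ih =>
    intro n hn h
    have h3k : (1:ℤ) ≤ 3^k := one_le_pow₀ (by norm_num)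
    by_cases hsmall : 2*n+1 ≤ 3^k
    · obtain ⟨F, h1, h2, h3⟩ := ih n hn hsmall
      exact ⟨F, h1, le_trans h2 (Nat.le_succ _), h3⟩
    push_neg at hsmall
    have hn1 : 1 ≤ n := by omega
    rcases eq_or_lt_of_le hn1 with heq | hn2
    · subst heq
      exact ⟨{1}, by decide, by simp, genOne⟩
    have hn2' : 2 ≤ n := hn2
    have hpow : (3:ℤ)^(k+1) = 3 * 3^k := by rw [pow_succ]; ring
    rcases eq_or_lt_of_le hn2' with heq | hn3
    · subst heq
      refine ⟨{1, 2}, by decide, ?_, genTwo⟩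
      have : (5:ℤ) ≤ 3*3^k := by omega
      have : 1 ≤ k := by
        by_contra hk
        interval_cases k <;> omega
      have hcard : ({1, 2} : Finset ℤ).card = 2 := by decide
      rw [hcard]
      omega
    have hn3' : 3 ≤ n := hn3
    obtain ⟨s, hs⟩ : Odd ((3:ℤ)^k) := Odd.pow (by decide)
    rw [two_mul] at hs
    have hs' : (3:ℤ)^k = 2*s + 1 := by omega
    set c : ℤ := max (n/2 + 1) (n - s) with hc
    have hkey : 2*n + 1 ≤ 6*s + 3 := by omega
    have hc1 : 1 ≤ c := le_trans (by omega) (le_max_left _ _)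
    have hcn : c ≤ n := by omega
    have hm0 : 0 ≤ n - c := by omega
    have hc2 : c ≤ 2*(n - c) + 1 := by omega
    have hms : 2*(n - c) + 1 ≤ 3^k := by omega
    have hmc : n - c < c := by omega
    obtain ⟨F, hF1, hF2, hF3⟩ := ih (n - c) hm0 hms
    have hcF : c ∉ F := fun hmem => by have := hF1 c hmem; omega
    refine ⟨insert c F, ?_, ?_, ?_⟩
    · intro j hj
      rcases Finset.mem_insert.mp hj with rfl | hj
      · exact ⟨hc1, hcn⟩
      · have := hF1 j hj; omega
    · exact le_trans (Finset.card_insert_le _ _) (by omega)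
    · have := genIns hm0 hc1 hc2 hcF hF3
      rwa [show n - c + c = n by ring] at this

lemma genLower {n : ℤ} {F : Finset ℤ} (hn : 0 ≤ n) (h : GeneratesAtLevel n F) :
    2*n + 1 ≤ 3 ^ F.card := by
  classical
  obtain ⟨hb, hgen⟩ := h
  have hA : ∀ x : ℤ, |x| ≤ n → ∃ α : ℤ → ℤ,
      (∀ j ∈ F, α j = -1 ∨ α j = 0 ∨ α j = 1) ∧ x = ∑ j ∈ F, α j * j := by
    intro x hx
    obtain ⟨α, h1, h2, _⟩ := hgen x hx
    exact ⟨α, h1, h2⟩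
  set A : ℤ → (ℤ → ℤ) := fun x => if hx : |x| ≤ n then (hA x hx).choose else 0 with hAdef
  have hAspec : ∀ x : ℤ, |x| ≤ n → (∀ j ∈ F, A x j = -1 ∨ A x j = 0 ∨ A x j = 1) ∧
      x = ∑ j ∈ F, A x j * j := by
    intro x hx
    simp only [hAdef, dif_pos hx]
    exact (hA x hx).choose_spec
  set enc : ℤ → Fin 3 := fun t => if t = -1 then 0 else if t = 0 then 1 else 2 with henc
  set f : ℤ → (↥F → Fin 3) := fun x j => enc (A x (j : ℤ)) with hf
  have hinj : Set.InjOn f (Finset.Icc (-n) n) := by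
    intro x hx y hy hfxy
    simp only [Finset.coe_Icc, Set.mem_Icc] at hx hy
    have hx' : |x| ≤ n := abs_le.mpr hx
    have hy' : |y| ≤ n := abs_le.mpr hy
    obtain ⟨hxv, hxs⟩ := hAspec x hx'
    obtain ⟨hyv, hys⟩ := hAspec y hy'
    have : ∀ j ∈ F, A x j = A y j := by
      intro j hj
      have hxy := congr_fun hfxy ⟨j, hj⟩
      simp only [hf] at hxy
      rcases hxv j hj with h1 | h1 | h1 <;> rcases hyv j hj with h2 | h2 | h2 <;>
        rw [h1, h2] at hxy ⊢ <;> first | rfl | (exfalso; revert hxy; decide)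
    rw [hxs, hys]
    exact Finset.sum_congr rfl fun j hj => by rw [this j hj]
  have hcard := Finset.card_le_card_of_injOn f (fun x _ => Finset.mem_univ (f x)) hinj
  rw [Finset.card_univ, Fintype.card_fun, Fintype.card_coe, Fintype.card_fin] at hcard
  rw [Int.card_Icc] at hcard
  have h1 : (2*n+1).toNat ≤ 3 ^ F.card := by
    convert hcard using 2
    omega
  have := Int.toNat_of_nonneg (show (0:ℤ) ≤ 2*n+1 by omega)
  calc 2*n+1 = ((2*n+1).toNat : ℤ) := this.symm
    _ ≤ ((3 ^ F.card : ℕ) : ℤ) := by exact_mod_cast h1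
    _ = 3 ^ F.card := by push_cast; ring

lemma ternaryDigits : ∀ (k : ℕ) (m : ℤ), 2*|m| ≤ 3^k - 1 →
    ∃ ε : ℕ → ℤ, (∀ i, ε i = -1 ∨ ε i = 0 ∨ ε i = 1) ∧
      m = ∑ i ∈ Finset.range k, ε i * 3^i := by
  intro k
  induction k with
  | zero =>
    intro m hm
    have h0 := abs_nonneg m
    have h1 : |m| = 0 := by simp only [pow_zero] at hm; omega
    have hm0 : m = 0 := abs_eq_zero.mp h1
    exact ⟨fun _ => 0, fun i => Or.inr (Or.inl rfl), by simp [hm0]⟩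
  | succ k ih =>
    intro m hm
    have h3k : (1:ℤ) ≤ 3^k := one_le_pow₀ (by norm_num)
    have hpow : (3:ℤ)^(k+1) = 3 * 3^k := by rw [pow_succ]; ring
    obtain ⟨s, hs⟩ : Odd ((3:ℤ)^k) := Odd.pow (by decide)
    rw [two_mul] at hs
    have h1 : -(3^(k+1)-1) ≤ 2*m ∧ 2*m ≤ 3^(k+1)-1 := by
      rcases abs_cases m with ⟨he, _⟩ | ⟨he, _⟩ <;> omega
    set d : ℤ := if 2*m > 3^k - 1 then 1 else if 2*m < -(3^k - 1) then -1 else 0 with hd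
    have hdval : d * 3^k = (if 2*m > 3^k-1 then 3^k else if 2*m < -(3^k-1) then -(3^k) else 0) := by
      rw [hd]; split_ifs <;> ring
    have hm' : 2*|m - d*3^k| ≤ 3^k - 1 := by
      rcases abs_cases (m - d*3^k) with ⟨he, _⟩ | ⟨he, _⟩ <;> rw [he, hdval] <;>
        split_ifs <;> omega
    obtain ⟨ε, hε1, hε2⟩ := ih (m - d*3^k) hm'
    refine ⟨fun i => if i = k then d else ε i, fun i => ?_, ?_⟩
    · dsimp only
      by_cases h : i = k
      · rw [if_pos h]
        rw [hd]; split_ifs <;> omega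
      · rw [if_neg h]; exact hε1 i
    · rw [Finset.sum_range_succ]
      dsimp only
      rw [if_pos rfl]
      have heq : ∑ i ∈ Finset.range k, (if i = k then d else ε i) * 3^i
          = ∑ i ∈ Finset.range k, ε i * 3^i := by
        refine Finset.sum_congr rfl fun i hi => ?_
        rw [if_neg (Nat.ne_of_lt (Finset.mem_range.mp hi))]
      rw [heq, ← hε2]; ring

lemma circleDist (r s : ℝ) :
    dist ((r : AddCircle (1:ℝ))) ((s : ℝ) : AddCircle (1:ℝ)) = |(r - s) - round (r - s)| := by
  rw [dist_eq_norm, ← QuotientAddGroup.mk_sub, AddCircle.norm_eq]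
  simp

lemma coe_rep (x : AddCircle (1:ℝ)) : ∃ r : ℝ, -(1/2) ≤ r ∧ r < 1/2 ∧ (r : AddCircle (1:ℝ)) = x := by
  haveI : Fact ((0:ℝ) < 1) := ⟨one_pos⟩
  set y := AddCircle.equivIco 1 (-(1/2)) x with hy
  refine ⟨(y : ℝ), y.2.1, by have := y.2.2; linarith, ?_⟩
  exact (AddCircle.equivIco 1 (-(1/2))).symm_apply_apply x


lemma tolExists {lam : ℝ} (hl0 : 0 < lam) (hl : lam < 1/2) (K : ℕ)
    (hK : 1 ≤ 2*lam*3^K) (hKp : ∀ i, i < K → 2*lam*3^i < 1) :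
    ∃ F : Finset (AddCircle (1:ℝ)), GeneratesAtTolerance lam F ∧ F.card ≤ K := by
  classical
  set u : ℕ → ℝ := fun i => 2*lam*3^i with hu
  set c : ℕ → AddCircle (1:ℝ) := fun i => ((u i : ℝ) : AddCircle (1:ℝ)) with hc
  have hu_pos : ∀ i, 0 < u i := fun i => by positivity
  have hu_ge : ∀ i, 2*lam ≤ u i := by
    intro i
    have : (1:ℝ) ≤ 3^i := one_le_pow₀ (by norm_num)
    simp only [hu]
    nlinarith
  -- pairwise distances
  have hdist : ∀ i j, i < K → j < K → i < j → lam < dist (c i) (c j) := by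
    intro i j hiK hjK hij
    have hui : u i < u j := by
      simp only [hu]
      have : (3:ℝ)^i < 3^j := pow_lt_pow_right₀ (by norm_num) hij
      nlinarith
    have h4 : 4*lam ≤ u j - u i := by
      have h3 : 3*((3:ℝ)^i) ≤ 3^j := by
        calc 3*((3:ℝ)^i) = 3^(i+1) := by ring
          _ ≤ 3^j := pow_le_pow_right₀ (by norm_num) hij
      have : (1:ℝ) ≤ 3^i := one_le_pow₀ (by norm_num)
      simp only [hu]
      nlinarith
    have hlt : u j - u i < 1 - 2*lam := by
      have h1 : u j < 1 := hKp j hjK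
      have h2 : 2*lam ≤ u i := hu_ge i
      linarith
    rw [hc, circleDist]
    set t : ℝ := u i - u j with ht
    have ht1 : -1 < t := by simp only [ht]; linarith
    have ht2 : t ≤ -4*lam := by simp only [ht]; linarith
    have hround : round t = 0 ∨ round t = -1 := by
      have hf : round t = ⌊t + 1/2⌋ := round_eq t
      have hge : (-1 : ℤ) ≤ ⌊t + 1/2⌋ := Int.le_floor.mpr (by push_cast; linarith)
      have hlt' : ⌊t + 1/2⌋ < 1 := Int.floor_lt.mpr (by push_cast; nlinarith)
      omega
    rcases hround with h | h <;> rw [h]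
    · push_cast
      rw [abs_of_nonpos (by linarith)]
      linarith
    · push_cast
      rw [abs_of_pos (by linarith)]
      linarith
  have hinj : ∀ i j, i < K → j < K → c i = c j → i = j := by
    intro i j hiK hjK hcij
    by_contra hne
    rcases Nat.lt_or_ge i j with h | h
    · have := hdist i j hiK hjK h
      rw [hcij] at this
      simp at this
      linarith
    · have hji : j < i := by omega
      have := hdist j i hjK hiK hji
      rw [hcij] at this
      simp at this
      linarith
  set F : Finset (AddCircle (1:ℝ)) := (Finset.range K).image c with hF
  refine ⟨F, ⟨?_, ?_⟩, ?_⟩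
  · -- separation
    intro x hx y hy hne
    obtain ⟨i, hi, rfl⟩ := Finset.mem_image.mp hx
    obtain ⟨j, hj, rfl⟩ := Finset.mem_image.mp hy
    rw [Finset.mem_range] at hi hj
    rcases Nat.lt_trichotomy i j with h | h | h
    · exact hdist i j hi hj h
    · exact absurd (congrArg c h) hne
    · rw [dist_comm]; exact hdist j i hj hi h
  · -- coverage
    intro x
    obtain ⟨r, hr1, hr2, hrx⟩ := coe_rep x
    obtain ⟨s, hs⟩ : Odd ((3:ℤ)^K) := Odd.pow (by decide)
    rw [two_mul] at hs
    set m : ℤ := round (r / (2*lam)) with hm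
    have h2l : (0:ℝ) < 2*lam := by linarith
    have hsK : ((3:ℝ))^K = ((3^K : ℤ) : ℝ) := by push_cast; ring
    have h3 : ((3:ℝ))^K = 2*(s:ℝ)+1 := by
      rw [hsK, hs]; push_cast; ring
    have hmle : m ≤ s := by
      have hlt2 : r / (2*lam) + 1/2 < ((s+1 : ℤ) : ℝ) := by
        push_cast
        rw [div_add' _ _ _ (ne_of_gt h2l), div_lt_iff₀ h2l]
        nlinarith [hr2, hK]
      have := Int.floor_lt.mpr hlt2
      rw [hm, round_eq]
      omega
    have hmge : -s ≤ m := by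
      have key : (((-s) : ℤ) : ℝ) ≤ r / (2*lam) + 1/2 := by
        push_cast
        have : -(s:ℝ) - 1/2 ≤ r / (2*lam) := by
          rw [le_div_iff₀ h2l]
          nlinarith [hr1, hK]
        linarith
      have := Int.le_floor.mpr key
      rw [hm, round_eq]
      omega
    have hclose : |r - 2*lam*(m:ℝ)| ≤ lam := by
      have h1 : |r/(2*lam) - round (r/(2*lam))| ≤ 1/2 := abs_sub_round _
      have h2 : r - 2*lam*(m:ℝ) = (2*lam) * (r/(2*lam) - (m:ℝ)) := by
        field_simp
      rw [h2, abs_mul, abs_of_pos h2l, ← hm] at *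
      calc 2*lam * |r/(2*lam) - (m:ℝ)| ≤ 2*lam * (1/2) := by
            apply mul_le_mul_of_nonneg_left _ (le_of_lt h2l)
            exact h1
        _ = lam := by ring
    obtain ⟨ε, hε1, hε2⟩ := ternaryDigits K m
      (by rcases abs_cases m with ⟨h, _⟩ | ⟨h, _⟩ <;> omega)
    set α : AddCircle (1:ℝ) → ℤ := fun z => ∑ i ∈ Finset.range K, if z = c i then ε i else 0
      with hα
    have hαc : ∀ i, i < K → α (c i) = ε i := by
      intro i hiK
      rw [hα]
      dsimp only
      rw [Finset.sum_eq_single_of_mem i (Finset.mem_range.mpr hiK)]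
      · rw [if_pos rfl]
      · intro j hj hne
        rw [Finset.mem_range] at hj
        rw [if_neg (fun h => hne (hinj j i hj hiK h.symm))]
    refine ⟨α, ?_, ?_⟩
    · intro j hj
      obtain ⟨i, hi, rfl⟩ := Finset.mem_image.mp hj
      rw [Finset.mem_range] at hi
      rw [hαc i hi]
      exact hε1 i
    · have hsum : ∑ j ∈ F, α j • j = ((2*lam*(m:ℝ) : ℝ) : AddCircle (1:ℝ)) := by
        rw [hF, Finset.sum_image (fun i hi j hj hij =>
          hinj i j (Finset.mem_range.mp hi) (Finset.mem_range.mp hj) hij)]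
        have : ∀ i ∈ Finset.range K, α (c i) • c i
            = ((ε i • u i : ℝ) : AddCircle (1:ℝ)) := by
          intro i hi
          rw [hαc i (Finset.mem_range.mp hi), hc]
          dsimp only
          rw [← QuotientAddGroup.mk_zsmul]
        rw [Finset.sum_congr rfl this]
        rw [← QuotientAddGroup.mk_sum]
        congr 1
        simp only [zsmul_eq_mul, hu]
        have hcast := congrArg (fun z : ℤ => (z : ℝ)) hε2
        push_cast at hcast
        rw [hcast, Finset.mul_sum]
        exact Finset.sum_congr rfl fun i hi => by ring
      rw [hsum, ← hrx, circleDist]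
      have habs : |r - 2*lam*(m:ℝ)| < 1/2 := lt_of_le_of_lt hclose hl
      have hr0 : round (r - 2*lam*(m:ℝ)) = 0 := by
        rw [round_eq_zero_iff]
        have h1 := abs_lt.mp habs
        exact ⟨by linarith [h1.1], by linarith [h1.2]⟩
      rw [hr0]
      push_cast
      rw [sub_zero]
      exact hclose
  · rw [hF]
    exact le_trans (Finset.card_image_le) (by simp)

lemma tolLower {lam : ℝ} (hl0 : 0 < lam) {F : Finset (AddCircle (1:ℝ))}
    (h : GeneratesAtTolerance lam F) : 1 ≤ 2*lam*3^F.card := by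
  classical
  haveI : Fact ((0:ℝ) < 1) := ⟨one_pos⟩
  obtain ⟨_, hcov⟩ := h
  set dec : Fin 3 → ℤ := ![-1, 0, 1] with hdec
  set S : Finset (AddCircle (1:ℝ)) :=
    Finset.image (fun g : ↥F → Fin 3 => ∑ j ∈ F.attach, dec (g j) • (j : AddCircle (1:ℝ)))
      Finset.univ with hS
  have hScard : S.card ≤ 3 ^ F.card := by
    refine le_trans Finset.card_image_le ?_
    rw [Finset.card_univ, Fintype.card_fun, Fintype.card_coe, Fintype.card_fin]
  have hcover : (Set.univ : Set (AddCircle (1:ℝ))) ⊆ ⋃ p ∈ S, Metric.closedBall p lam := by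
    intro x _
    obtain ⟨α, hαv, hαd⟩ := hcov x
    set g : ↥F → Fin 3 := fun j => if α j = -1 then 0 else if α j = 0 then 1 else 2 with hg
    have hsum : ∑ j ∈ F, α j • j = ∑ j ∈ F.attach, dec (g j) • (j : AddCircle (1:ℝ)) := by
      rw [← Finset.sum_attach F (fun j => α j • j)]
      refine Finset.sum_congr rfl fun j _ => ?_
      rcases hαv j j.2 with h | h | h <;> simp [hg, hdec, h]
    refine Set.mem_iUnion₂.mpr ⟨∑ j ∈ F.attach, dec (g j) • (j : AddCircle (1:ℝ)), ?_, ?_⟩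
    · exact Finset.mem_image.mpr ⟨g, Finset.mem_univ g, rfl⟩
    · rw [Metric.mem_closedBall, ← hsum]
      exact hαd
  have h1 : (volume (Set.univ : Set (AddCircle (1:ℝ))))
      ≤ ∑ p ∈ S, volume (Metric.closedBall p lam) :=
    le_trans (measure_mono hcover) (measure_biUnion_finset_le S _)
  rw [AddCircle.measure_univ] at h1
  have h2 : ∀ p ∈ S, volume (Metric.closedBall p lam) = ENNReal.ofReal (min 1 (2*lam)) :=
    fun p _ => AddCircle.volume_closedBall (T := (1:ℝ)) lam
  rw [Finset.sum_congr rfl h2, Finset.sum_const, nsmul_eq_mul] at h1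
  have h3 : (S.card : ℝ≥0∞) * ENNReal.ofReal (min 1 (2*lam))
      = ENNReal.ofReal ((S.card : ℝ) * min 1 (2*lam)) := by
    rw [ENNReal.ofReal_mul (Nat.cast_nonneg _), ENNReal.ofReal_natCast]
  rw [h3] at h1
  have h4 : (1:ℝ) ≤ (S.card : ℝ) * min 1 (2*lam) := by
    have := (ENNReal.ofReal_le_ofReal_iff (by positivity)).mp h1
    linarith
  have h5 : (S.card : ℝ) ≤ (3:ℝ) ^ F.card := by exact_mod_cast hScard
  have h6 : min 1 (2*lam) ≤ 2*lam := min_le_right _ _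
  have h7 : (0:ℝ) ≤ min 1 (2*lam) := le_min (by norm_num) (by linarith)
  have e1 : (S.card:ℝ) * (min 1 (2*lam)) ≤ (S.card:ℝ) * (2*lam) :=
    mul_le_mul_of_nonneg_left h6 (Nat.cast_nonneg _)
  have e2 : (S.card:ℝ) * (2*lam) ≤ (3:ℝ)^F.card * (2*lam) :=
    mul_le_mul_of_nonneg_right h5 (by linarith)
  nlinarith [e1, e2]


lemma h0_val {n : ℤ} (hn : 0 ≤ n) {K : ℕ} (hK : 2*n+1 ≤ 3^K)
    (hmin : ∀ c : ℕ, 2*n+1 ≤ (3:ℤ)^c → K ≤ c) :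
    sInf {c : ℕ | ∃ F : Finset ℤ, GeneratesAtLevel n F ∧ F.card = c} = K := by
  obtain ⟨F, _, hcard, hgen⟩ := genExists K n hn hK
  set S := {c : ℕ | ∃ F : Finset ℤ, GeneratesAtLevel n F ∧ F.card = c} with hS
  have hmem : F.card ∈ S := ⟨F, hgen, rfl⟩
  have hle : sInf S ≤ K := le_trans (Nat.sInf_le hmem) hcard
  obtain ⟨F₀, hg₀, hc₀⟩ := Nat.sInf_mem (s := S) ⟨F.card, hmem⟩
  have hlow := genLower hn hg₀
  rw [hc₀] at hlow
  exact le_antisymm hle (hmin _ hlow)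

lemma h1_val {lam : ℝ} (hl0 : 0 < lam) (hl : lam < 1/2) {K : ℕ}
    (hK : 1 ≤ 2*lam*3^K) (hKp : ∀ i, i < K → 2*lam*3^i < 1) :
    sInf {c : ℕ | ∃ F : Finset (AddCircle (1:ℝ)),
      GeneratesAtTolerance lam F ∧ F.card = c} = K := by
  obtain ⟨F, hgen, hcard⟩ := tolExists hl0 hl K hK hKp
  set S := {c : ℕ | ∃ F : Finset (AddCircle (1:ℝ)), GeneratesAtTolerance lam F ∧ F.card = c}
    with hS
  have hmem : F.card ∈ S := ⟨F, hgen, rfl⟩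
  have hle : sInf S ≤ K := le_trans (Nat.sInf_le hmem) hcard
  obtain ⟨F₀, hg₀, hc₀⟩ := Nat.sInf_mem (s := S) ⟨F.card, hmem⟩
  have hlow := tolLower hl0 hg₀
  rw [hc₀] at hlow
  refine le_antisymm hle ?_
  by_contra hc
  push_neg at hc
  have := hKp _ hc
  linarith

/-- Riemann–Roch for the Arakelov divisor `D = a{∞}`:
`h⁰(a) − h¹(a) = ⌈(a + log 2)/log 3⌉' − 1_L(a)`. -/
theorem stmt11 (a : ℝ) :
    (h0 a : ℤ) - (h1 a : ℤ) =
      ceil' ((a + Real.log 2) / Real.log 3) - (if a ∈ excL then 1 else 0) := by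
  have hea := Real.exp_pos a
  have hlog3 : (0:ℝ) < Real.log 3 := Real.log_pos (by norm_num)
  have hl2e : a + Real.log 2 = Real.log (2 * Real.exp a) := by
    rw [Real.log_mul (by norm_num) (Real.exp_ne_zero a), Real.log_exp]; ring
  have hpowlog : ∀ k : ℕ, (k:ℝ) * Real.log 3 = Real.log ((3:ℝ)^k) := fun k => by
    rw [Real.log_pow]
  have iffle : ∀ k : ℕ, ((a + Real.log 2 ≤ (k:ℝ) * Real.log 3) ↔ 2*Real.exp a ≤ 3^k) :=
    fun k => by
    rw [hl2e, hpowlog, Real.log_le_log_iff (by positivity) (by positivity)]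
  have ifflt : ∀ k : ℕ, (((k:ℝ) * Real.log 3 < a + Real.log 2) ↔ (3:ℝ)^k < 2*Real.exp a) :=
    fun k => by
    rw [hl2e, hpowlog, Real.log_lt_log_iff (by positivity) (by positivity)]
  have hLsum : ∀ k : ℕ, (k:ℝ) * Real.log 3 + Real.log (1 + (3:ℝ)^(-(k:ℤ)))
      = Real.log ((3:ℝ)^k + 1) := fun k => by
    have h3k : (0:ℝ) < 3^k := by positivity
    have hz : (3:ℝ)^(-(k:ℤ)) = ((3:ℝ)^k)⁻¹ := by rw [zpow_neg, zpow_natCast]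
    rw [hpowlog, hz, ← Real.log_mul (ne_of_gt h3k) (by positivity)]
    congr 1
    field_simp
  have hexcL : a ∈ excL ↔ ∃ k : ℕ, (3:ℝ)^k < 2*Real.exp a ∧ 2*Real.exp a < 3^k + 1 := by
    constructor
    · rintro ⟨k, h1, h2⟩
      refine ⟨k, (ifflt k).mp h1, ?_⟩
      rw [hLsum k, hl2e] at h2
      exact (Real.log_lt_log_iff (by positivity) (by positivity)).mp h2
    · rintro ⟨k, h1, h2⟩
      refine ⟨k, (ifflt k).mpr h1, ?_⟩
      rw [hLsum k, hl2e]
      exact (Real.log_lt_log_iff (by positivity) (by positivity)).mpr h2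
  rcases lt_or_ge (Real.exp a) (1/2) with hc1 | hc1
  · -- CASE 1 : e^a < 1/2
    have hfl0 : ⌊Real.exp a⌋ = 0 := Int.floor_eq_zero_iff.mpr ⟨hea.le, by linarith⟩
    have h0z : h0 a = 0 := by
      unfold h0
      rw [hfl0]
      exact Nat.sInf_eq_zero.mpr (Or.inl ⟨∅, genZero, rfl⟩)
    have hneg : a + Real.log 2 < 0 := by
      rw [hl2e]; exact Real.log_neg (by positivity) (by linarith)
    have hnotL : a ∉ excL := by
      rintro ⟨k, h1, _⟩
      have : (0:ℝ) ≤ (k:ℝ) * Real.log 3 := by positivity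
      linarith
    have hex : ∃ k : ℕ, 1 ≤ 2*Real.exp a*3^k := by
      obtain ⟨k, hk⟩ := pow_unbounded_of_one_lt (1/(2*Real.exp a)) (by norm_num : (1:ℝ) < 3)
      refine ⟨k, ?_⟩
      rw [div_lt_iff₀ (by positivity)] at hk
      nlinarith
    set K := Nat.find hex with hKdef
    have hKspec : 1 ≤ 2*Real.exp a*3^K := Nat.find_spec hex
    have h1v : h1 a = K := by
      unfold h1
      rw [if_neg (not_le.mpr hc1)]
      exact h1_val hea hc1 hKspec (fun i hi => not_le.mp (Nat.find_min hex hi))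
    have hK1 : 1 ≤ K := by
      rcases Nat.eq_zero_or_pos K with h | h
      · exfalso
        rw [h] at hKspec
        simp only [pow_zero, mul_one] at hKspec
        linarith
      · exact h
    have hx : (a + Real.log 2)/Real.log 3 < 0 := div_neg_of_neg_of_pos hneg hlog3
    rw [h0z, h1v]
    unfold ceil'
    rw [if_neg (not_le.mpr hx), if_neg hnotL]
    have hceil : ⌈-((a + Real.log 2)/Real.log 3)⌉ = (K:ℤ) := by
      rw [Int.ceil_eq_iff]
      constructor
      · have hprev : 2*Real.exp a*3^(K-1) < 1 := not_le.mp (Nat.find_min hex (by omega))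
        have hlog : ((K - 1 : ℕ):ℝ) * Real.log 3 + (a + Real.log 2) < 0 := by
          rw [hl2e, hpowlog, ← Real.log_mul (by positivity) (by positivity)]
          refine (Real.log_neg_iff (by positivity)).mpr ?_
          nlinarith [hprev]
        have hcast : ((K - 1 : ℕ):ℝ) = (K:ℝ) - 1 := by
          rw [Nat.cast_sub hK1]; norm_num
        rw [hcast] at hlog
        push_cast
        rw [← neg_div, lt_div_iff₀ hlog3]
        linarith
      · have hlog : 0 ≤ (K:ℝ) * Real.log 3 + (a + Real.log 2) := by
          rw [hl2e, hpowlog, ← Real.log_mul (by positivity) (by positivity)]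
          refine (Real.log_nonneg_iff (by positivity)).mpr ?_
          nlinarith [hKspec]
        push_cast
        rw [← neg_div, div_le_iff₀ hlog3]
        linarith
    rw [hceil]
    ring
  rcases lt_or_ge (Real.exp a) 1 with hc2 | hc2
  · -- CASE 2 : 1/2 ≤ e^a < 1
    have hfl0 : ⌊Real.exp a⌋ = 0 := Int.floor_eq_zero_iff.mpr ⟨hea.le, hc2⟩
    have h0z : h0 a = 0 := by
      unfold h0
      rw [hfl0]
      exact Nat.sInf_eq_zero.mpr (Or.inl ⟨∅, genZero, rfl⟩)
    have h1z : h1 a = 0 := by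
      unfold h1
      rw [if_pos hc1]
    rw [h0z, h1z]
    rcases eq_or_lt_of_le (show (1:ℝ) ≤ 2*Real.exp a by linarith) with heq | hlt
    · have hzero : a + Real.log 2 = 0 := by
        rw [hl2e, ← heq, Real.log_one]
      have hnotL : a ∉ excL := by
        rintro ⟨k, h1, _⟩
        have : (0:ℝ) ≤ (k:ℝ) * Real.log 3 := by positivity
        linarith
      unfold ceil'
      rw [hzero, zero_div, if_pos le_rfl, Int.ceil_zero, if_neg hnotL]
      norm_num
    · have hinL : a ∈ excL := by
        refine hexcL.mpr ⟨0, by simpa using hlt, ?_⟩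
        rw [pow_zero]
        linarith
      have hxpos : 0 < (a + Real.log 2) := by
        rw [hl2e]
        exact Real.log_pos hlt
      have hxle : (a + Real.log 2)/Real.log 3 ≤ 1 := by
        rw [div_le_one hlog3]
        have h2 := (iffle 1).mpr (by nlinarith : 2*Real.exp a ≤ 3^1)
        push_cast at h2
        linarith
      have hceil : ⌈(a + Real.log 2)/Real.log 3⌉ = 1 := by
        rw [Int.ceil_eq_iff]
        constructor
        · push_cast
          simpa using div_pos hxpos hlog3
        · push_cast
          exact hxle
      unfold ceil'
      rw [if_pos (le_of_lt (div_pos hxpos hlog3)), hceil, if_pos hinL]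
      norm_num
  · -- CASE 3 : 1 ≤ e^a
    set n := ⌊Real.exp a⌋ with hn
    have hn1 : 1 ≤ n := Int.le_floor.mpr (by exact_mod_cast hc2)
    have hfl : (n:ℝ) ≤ Real.exp a := Int.floor_le _
    have hfu : Real.exp a < (n:ℝ) + 1 := Int.lt_floor_add_one _
    have h1z : h1 a = 0 := by
      unfold h1
      rw [if_pos (by linarith)]
    have hex : ∃ k : ℕ, 2*n+1 ≤ 3^k := by
      obtain ⟨k, hk⟩ := pow_unbounded_of_one_lt (2*n+1 : ℤ) (by norm_num : (1:ℤ) < 3)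
      exact ⟨k, le_of_lt hk⟩
    set K := Nat.find hex with hKdef
    have hKspec : 2*n+1 ≤ 3^K := Nat.find_spec hex
    have h0v : h0 a = K := by
      unfold h0
      rw [← hn]
      exact h0_val (by omega) hKspec (fun c hc => Nat.find_min' hex hc)
    have hK1 : 1 ≤ K := by
      rcases Nat.eq_zero_or_pos K with h | h
      · exfalso
        rw [h] at hKspec
        simp only [pow_zero] at hKspec
        omega
      · exact h
    obtain ⟨t, ht⟩ : Odd ((3:ℤ)^(K-1)) := Odd.pow (by decide)
    rw [two_mul] at ht
    have hprevZ : (3:ℤ)^(K-1) < 2*n+1 := not_le.mp (Nat.find_min hex (by omega))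
    have hprevZ' : (3:ℤ)^(K-1) ≤ 2*n - 1 := by omega
    have hr1 : ((3:ℝ))^(K-1) ≤ 2*(n:ℝ) - 1 := by exact_mod_cast hprevZ'
    have hrK : 2*(n:ℝ)+1 ≤ 3^K := by exact_mod_cast hKspec
    rw [h0v, h1z]
    by_cases hL : a ∈ excL
    · obtain ⟨k, hk1, hk2⟩ := hexcL.mp hL
      obtain ⟨s, hs⟩ : Odd ((3:ℤ)^k) := Odd.pow (by decide)
      rw [two_mul] at hs
      have hsr : ((3:ℝ))^k = 2*(s:ℝ)+1 := by
        rw [show ((3:ℝ))^k = (((3:ℤ)^k : ℤ) : ℝ) by push_cast; ring, hs]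
        push_cast
        ring
      have hnlow : s ≤ n := Int.le_floor.mpr (by nlinarith [hk1])
      have hnup : n ≤ s := by
        have hlt2 : Real.exp a < (s:ℝ) + 1 := by nlinarith [hk2]
        have := Int.floor_lt.mpr (show Real.exp a < ((s+1 : ℤ):ℝ) by push_cast; linarith)
        omega
      have h2n3k : 2*n+1 = (3:ℤ)^k := by omega
      have hKk : K = k := by
        refine le_antisymm (Nat.find_min' hex (by omega)) ?_
        by_contra hlt2
        push_neg at hlt2
        have := pow_lt_pow_right₀ (show (1:ℤ) < 3 by norm_num) hlt2
        omega
      have hxgt : (k:ℝ) < (a + Real.log 2)/Real.log 3 := by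
        rw [lt_div_iff₀ hlog3]
        exact (ifflt k).mpr hk1
      have hxle : (a + Real.log 2)/Real.log 3 ≤ (k:ℝ)+1 := by
        rw [div_le_iff₀ hlog3]
        have h2 : 2*Real.exp a ≤ 3^(k+1) := by
          have h1k : (1:ℝ) ≤ 3^k := one_le_pow₀ (by norm_num)
          have h3 : ((3:ℝ))^k + 1 ≤ 3^(k+1) := by
            rw [pow_succ]
            nlinarith
          linarith [hk2]
        have h4 := (iffle (k+1)).mpr h2
        push_cast at h4
        linarith
      have hceil : ⌈(a + Real.log 2)/Real.log 3⌉ = (k:ℤ)+1 := by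
        rw [Int.ceil_eq_iff]
        constructor
        · push_cast
          linarith
        · push_cast
          linarith
      unfold ceil'
      have hx0 : (0:ℝ) ≤ (a + Real.log 2)/Real.log 3 :=
        le_trans (Nat.cast_nonneg k) (le_of_lt hxgt)
      rw [if_pos hx0, hceil, if_pos hL, hKk]
      push_cast
      ring
    · have hup : 2*Real.exp a ≤ 3^K := by
        by_contra hgt
        push_neg at hgt
        refine hL (hexcL.mpr ⟨K, hgt, ?_⟩)
        nlinarith [hfu, hrK]
      have hlow : ((3:ℝ))^(K-1) < 2*Real.exp a := by nlinarith [hfl, hr1]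
      have hxle : (a + Real.log 2)/Real.log 3 ≤ (K:ℝ) := by
        rw [div_le_iff₀ hlog3]
        exact (iffle K).mpr hup
      have hxgt : (K:ℝ) - 1 < (a + Real.log 2)/Real.log 3 := by
        rw [lt_div_iff₀ hlog3]
        have h5 := (ifflt (K-1)).mpr hlow
        have hcast : ((K - 1 : ℕ):ℝ) = (K:ℝ) - 1 := by
          rw [Nat.cast_sub hK1]; norm_num
        rw [hcast] at h5
        linarith
      have hceil : ⌈(a + Real.log 2)/Real.log 3⌉ = (K:ℤ) := by
        rw [Int.ceil_eq_iff]
        refine ⟨by push_cast; linarith, by push_cast; linarith⟩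
      have hx0 : (0:ℝ) ≤ (a + Real.log 2)/Real.log 3 := by
        have hK1' : (1:ℝ) ≤ (K:ℝ) := by exact_mod_cast hK1
        linarith
      unfold ceil'
      rw [if_pos hx0, hceil, if_neg hL]
      ring
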